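/- Let A : Ω → L(H) be an observable on a finite-dimensional complex Hilbert space H, let (M, P, J) be a minimal Naimark dilation of A and (M', P', J') any Naimark dilation of A, with associated least disturbing channels Λ_A(ρ) = ∑_j P(j)JρJ*P(j) and Λ'_A(ρ) = ∑_j P'(j)J'ρ(J')*P'(j). Let W : M → M' be an isometry with W P(j) = P'(j) W for all j ∈ Ω and WJ = J'. Then, with Φ(σ) = WσW* and ι(σ') = W*σ'W + tr[(1_{M'} − WW*)σ']·σ₀ for any fixed state σ₀ on M, one has Φ ∘ Λ_A = Λ'_A and ι ∘ Λ'_A = Λ_A; in particular Λ'_A is post-processing equivalent to Λ_A. -/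

import Mathlib

open scoped ComplexOrder

noncomputable section

/-- A positive semidefinite operator on a finite-dimensional complex Hilbert space. -/
def IsPosOp {E : Type*} [NormedAddCommGroup E] [InnerProductSpace ℂ E]
    [FiniteDimensional ℂ E] (T : E →ₗ[ℂ] E) : Prop :=
  LinearMap.adjoint T = T ∧ ∀ x : E, 0 ≤ (inner ℂ (T x) x : ℂ)

/-- An orthogonal projection: a self-adjoint idempotent operator. -/
def IsOrthoProj {E : Type*} [NormedAddCommGroup E] [InnerProductSpace ℂ E]
    [FiniteDimensional ℂ E] (P : E →ₗ[ℂ] E) : Prop :=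
  LinearMap.adjoint P = P ∧ P ∘ₗ P = P

/-- A discrete observable (POVM) with finite outcome set `Ω`. -/
def IsPOVM {E : Type*} [NormedAddCommGroup E] [InnerProductSpace ℂ E]
    [FiniteDimensional ℂ E] {Ω : Type*} [Fintype Ω] (A : Ω → E →ₗ[ℂ] E) : Prop :=
  (∀ j, IsPosOp (A j)) ∧ ∑ j, A j = (1 : E →ₗ[ℂ] E)

/-- A projection-valued measure (PVM). -/
def IsPVM {E : Type*} [NormedAddCommGroup E] [InnerProductSpace ℂ E]
    [FiniteDimensional ℂ E] {Ω : Type*} [Fintype Ω] (P : Ω → E →ₗ[ℂ] E) : Prop :=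
  (∀ j, IsOrthoProj (P j)) ∧ ∑ j, P j = (1 : E →ₗ[ℂ] E)

/-- An isometry between inner product spaces: `J* J = 1`. -/
def IsIsometryOp {E F : Type*} [NormedAddCommGroup E] [InnerProductSpace ℂ E]
    [FiniteDimensional ℂ E] [NormedAddCommGroup F] [InnerProductSpace ℂ F]
    [FiniteDimensional ℂ F] (J : E →ₗ[ℂ] F) : Prop :=
  LinearMap.adjoint J ∘ₗ J = (1 : E →ₗ[ℂ] E)

/-- `(F, P, J)` is a Naimark dilation of the observable `A`. -/
def IsNaimark {E F : Type*} [NormedAddCommGroup E] [InnerProductSpace ℂ E]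
    [FiniteDimensional ℂ E] [NormedAddCommGroup F] [InnerProductSpace ℂ F]
    [FiniteDimensional ℂ F] {Ω : Type*} [Fintype Ω]
    (A : Ω → E →ₗ[ℂ] E) (P : Ω → F →ₗ[ℂ] F) (J : E →ₗ[ℂ] F) : Prop :=
  IsPVM P ∧ IsIsometryOp J ∧ ∀ j, A j = LinearMap.adjoint J ∘ₗ P j ∘ₗ J

/-- A minimal Naimark dilation: the vectors `P j (J φ)` span the dilation space. -/
def IsMinimalNaimark {E F : Type*} [NormedAddCommGroup E] [InnerProductSpace ℂ E]
    [FiniteDimensional ℂ E] [NormedAddCommGroup F] [InnerProductSpace ℂ F]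
    [FiniteDimensional ℂ F] {Ω : Type*} [Fintype Ω]
    (A : Ω → E →ₗ[ℂ] E) (P : Ω → F →ₗ[ℂ] F) (J : E →ₗ[ℂ] F) : Prop :=
  IsNaimark A P J ∧ Submodule.span ℂ {x : F | ∃ j φ, x = P j (J φ)} = ⊤

/-- The sandwich map `σ ↦ U ∘ σ ∘ V` as a linear map on operators. -/
def sandwich {E F : Type*} [NormedAddCommGroup E] [InnerProductSpace ℂ E]
    [NormedAddCommGroup F] [InnerProductSpace ℂ F]
    (U : E →ₗ[ℂ] F) (V : F →ₗ[ℂ] E) : (E →ₗ[ℂ] E) →ₗ[ℂ] (F →ₗ[ℂ] F) where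
  toFun σ := U ∘ₗ σ ∘ₗ V
  map_add' σ τ := by
    ext x; simp [LinearMap.add_comp, LinearMap.comp_add]
  map_smul' c σ := by
    ext x; simp

/-- The least disturbing channel `ρ ↦ ∑ j, P j J ρ J* P j` associated with
a Naimark dilation `(F, P, J)`. -/
def leastDisturbing {E F : Type*} [NormedAddCommGroup E] [InnerProductSpace ℂ E]
    [FiniteDimensional ℂ E] [NormedAddCommGroup F] [InnerProductSpace ℂ F]
    [FiniteDimensional ℂ F] {Ω : Type*} [Fintype Ω]
    (P : Ω → F →ₗ[ℂ] F) (J : E →ₗ[ℂ] F) : (E →ₗ[ℂ] E) →ₗ[ℂ] (F →ₗ[ℂ] F) :=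
  ∑ j, sandwich (P j ∘ₗ J) (LinearMap.adjoint J ∘ₗ P j)

/-- The Lüders channel `σ ↦ ∑ j, P j σ P j` of a PVM `P`. -/
def ludersChannel {F : Type*} [NormedAddCommGroup F] [InnerProductSpace ℂ F]
    {Ω : Type*} [Fintype Ω] (P : Ω → F →ₗ[ℂ] F) : (F →ₗ[ℂ] F) →ₗ[ℂ] (F →ₗ[ℂ] F) :=
  ∑ j, sandwich (P j) (P j)

/-- Complete positivity of a map on operators, expressed through the existence of
a Kraus decomposition (equivalent to complete positivity in finite dimension). -/
def IsCPMap {E F : Type*} [NormedAddCommGroup E] [InnerProductSpace ℂ E]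
    [FiniteDimensional ℂ E] [NormedAddCommGroup F] [InnerProductSpace ℂ F]
    [FiniteDimensional ℂ F] (Λ : (E →ₗ[ℂ] E) →ₗ[ℂ] (F →ₗ[ℂ] F)) : Prop :=
  ∃ (n : ℕ) (V : Fin n → (E →ₗ[ℂ] F)),
    ∀ ρ, Λ ρ = ∑ i, V i ∘ₗ ρ ∘ₗ LinearMap.adjoint (V i)

/-- A quantum channel: a completely positive trace-preserving linear map. -/
def IsChannel {E F : Type*} [NormedAddCommGroup E] [InnerProductSpace ℂ E]
    [FiniteDimensional ℂ E] [NormedAddCommGroup F] [InnerProductSpace ℂ F]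
    [FiniteDimensional ℂ F] (Λ : (E →ₗ[ℂ] E) →ₗ[ℂ] (F →ₗ[ℂ] F)) : Prop :=
  IsCPMap Λ ∧ ∀ ρ, LinearMap.trace ℂ F (Λ ρ) = LinearMap.trace ℂ E ρ

/-- `Λd` is the Heisenberg dual of `Λ`: `tr[Λ(ρ) B] = tr[ρ Λd(B)]` for all `ρ, B`. -/
def IsHeisenbergDual {E F : Type*} [NormedAddCommGroup E] [InnerProductSpace ℂ E]
    [FiniteDimensional ℂ E] [NormedAddCommGroup F] [InnerProductSpace ℂ F]
    [FiniteDimensional ℂ F] (Λ : (E →ₗ[ℂ] E) →ₗ[ℂ] (F →ₗ[ℂ] F))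
    (Λd : (F →ₗ[ℂ] F) →ₗ[ℂ] (E →ₗ[ℂ] E)) : Prop :=
  ∀ ρ B, LinearMap.trace ℂ F (Λ ρ ∘ₗ B) = LinearMap.trace ℂ E (ρ ∘ₗ Λd B)

/-- Channel post-processing: `Λ₀ ⪯ Λ` iff `Λ₀ = Γ ∘ Λ` for some channel `Γ`. -/
def ChanPP {E F G : Type*} [NormedAddCommGroup E] [InnerProductSpace ℂ E]
    [FiniteDimensional ℂ E] [NormedAddCommGroup F] [InnerProductSpace ℂ F]
    [FiniteDimensional ℂ F] [NormedAddCommGroup G] [InnerProductSpace ℂ G]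
    [FiniteDimensional ℂ G]
    (Λ₀ : (E →ₗ[ℂ] E) →ₗ[ℂ] (G →ₗ[ℂ] G)) (Λ : (E →ₗ[ℂ] E) →ₗ[ℂ] (F →ₗ[ℂ] F)) : Prop :=
  ∃ Γ : (F →ₗ[ℂ] F) →ₗ[ℂ] (G →ₗ[ℂ] G), IsChannel Γ ∧ Λ₀ = Γ ∘ₗ Λ

/-- Post-processing equivalence of channels. -/
def ChanEquiv {E F G : Type*} [NormedAddCommGroup E] [InnerProductSpace ℂ E]
    [FiniteDimensional ℂ E] [NormedAddCommGroup F] [InnerProductSpace ℂ F]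
    [FiniteDimensional ℂ F] [NormedAddCommGroup G] [InnerProductSpace ℂ G]
    [FiniteDimensional ℂ G]
    (Λ₀ : (E →ₗ[ℂ] E) →ₗ[ℂ] (G →ₗ[ℂ] G)) (Λ : (E →ₗ[ℂ] E) →ₗ[ℂ] (F →ₗ[ℂ] F)) : Prop :=
  ChanPP Λ₀ Λ ∧ ChanPP Λ Λ₀

/-- Observable post-processing: `B ⪯ A` via a stochastic matrix `p`. -/
def ObsPP {E : Type*} [NormedAddCommGroup E] [InnerProductSpace ℂ E]
    [FiniteDimensional ℂ E] {Ω₁ Ω₂ : Type*} [Fintype Ω₁] [Fintype Ω₂]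
    (B : Ω₂ → E →ₗ[ℂ] E) (A : Ω₁ → E →ₗ[ℂ] E) : Prop :=
  ∃ p : Ω₂ → Ω₁ → ℝ, (∀ k j, 0 ≤ p k j) ∧ (∀ j, ∑ k, p k j = 1) ∧
    ∀ k, B k = ∑ j, (p k j : ℂ) • A j

/-- Post-processing equivalence of observables. -/
def ObsEquiv {E : Type*} [NormedAddCommGroup E] [InnerProductSpace ℂ E]
    [FiniteDimensional ℂ E] {Ω₁ Ω₂ : Type*} [Fintype Ω₁] [Fintype Ω₂]
    (B : Ω₂ → E →ₗ[ℂ] E) (A : Ω₁ → E →ₗ[ℂ] E) : Prop :=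
  ObsPP B A ∧ ObsPP A B

/-- `B` is a relabeling of `A` (along some function `f` on outcomes). -/
def IsRelabeling {E : Type*} [NormedAddCommGroup E] [InnerProductSpace ℂ E]
    [FiniteDimensional ℂ E] {Ω₁ Ω₂ : Type*} [Fintype Ω₁] [Fintype Ω₂] [DecidableEq Ω₂]
    (B : Ω₂ → E →ₗ[ℂ] E) (A : Ω₁ → E →ₗ[ℂ] E) : Prop :=
  ∃ f : Ω₁ → Ω₂, ∀ k, B k = ∑ j ∈ Finset.univ.filter (fun j => f j = k), A j

/-- A minimally sufficient observable: every observable post-processing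
equivalent to it is a refinement of it (i.e. it is a relabeling of every such observable). -/
def MinSufficient {E : Type*} [NormedAddCommGroup E] [InnerProductSpace ℂ E]
    [FiniteDimensional ℂ E] {Ω : Type*} [Fintype Ω] [DecidableEq Ω]
    (A : Ω → E →ₗ[ℂ] E) : Prop :=
  ∀ (Ω' : Type) (_ : Fintype Ω') (B : Ω' → E →ₗ[ℂ] E),
    IsPOVM B → ObsEquiv B A → IsRelabeling A B

/-- Compatibility of an observable `A` and a channel `Λ`: there is an instrument
with the outcome statistics of `A` whose total channel is `Λ`. -/
def CompatObsChan {E F : Type*} [NormedAddCommGroup E] [InnerProductSpace ℂ E]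
    [FiniteDimensional ℂ E] [NormedAddCommGroup F] [InnerProductSpace ℂ F]
    [FiniteDimensional ℂ F] {Ω : Type*} [Fintype Ω]
    (A : Ω → E →ₗ[ℂ] E) (Λ : (E →ₗ[ℂ] E) →ₗ[ℂ] (F →ₗ[ℂ] F)) : Prop :=
  ∃ I : Ω → ((E →ₗ[ℂ] E) →ₗ[ℂ] (F →ₗ[ℂ] F)),
    (∀ j, IsCPMap (I j)) ∧
    (∀ j ρ, LinearMap.trace ℂ F (I j ρ) = LinearMap.trace ℂ E (ρ ∘ₗ A j)) ∧
    ∑ j, I j = Λ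

/-- Joint measurability (compatibility) of two observables. -/
def JointlyMeasurable {E : Type*} [NormedAddCommGroup E] [InnerProductSpace ℂ E]
    [FiniteDimensional ℂ E] {Ω₁ Ω₂ : Type*} [Fintype Ω₁] [Fintype Ω₂]
    (A : Ω₁ → E →ₗ[ℂ] E) (B : Ω₂ → E →ₗ[ℂ] E) : Prop :=
  ∃ G : Ω₁ × Ω₂ → E →ₗ[ℂ] E, IsPOVM G ∧
    (∀ j, A j = ∑ k, G (j, k)) ∧ (∀ k, B k = ∑ j, G (j, k))

/-- An extreme observable: an extreme point of the convex set of observables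
with the given outcome set. -/
def IsExtremeObs {E : Type*} [NormedAddCommGroup E] [InnerProductSpace ℂ E]
    [FiniteDimensional ℂ E] {Ω : Type*} [Fintype Ω] (A : Ω → E →ₗ[ℂ] E) : Prop :=
  IsPOVM A ∧ ∀ (B₁ B₂ : Ω → E →ₗ[ℂ] E) (t : ℝ), IsPOVM B₁ → IsPOVM B₂ →
    0 < t → t < 1 → (∀ j, A j = (t : ℂ) • B₁ j + ((1 - t : ℝ) : ℂ) • B₂ j) →
    (B₁ = A ∧ B₂ = A)

/-- `|x⟩⟨y|` : the rank-one operator `z ↦ ⟨y, z⟩ x`. -/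
def outer {E : Type*} [NormedAddCommGroup E] [InnerProductSpace ℂ E] (x y : E) :
    E →ₗ[ℂ] E where
  toFun z := (inner ℂ y z : ℂ) • x
  map_add' z w := by simp [inner_add_right, add_smul]
  map_smul' c z := by simp [inner_smul_right, smul_smul]

/-- Loewner order on operators: `S ≤ T` iff `T - S` is positive semidefinite. -/
def LoewnerLE {E : Type*} [NormedAddCommGroup E] [InnerProductSpace ℂ E]
    [FiniteDimensional ℂ E] (S T : E →ₗ[ℂ] E) : Prop :=
  IsPosOp (T - S)

/-- Compression of an operator `T` on `F` to a subspace `S`: `P_S ∘ T ∘ incl_S`. -/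
def compressTo {F : Type*} [NormedAddCommGroup F] [InnerProductSpace ℂ F]
    [FiniteDimensional ℂ F] (S : Submodule ℂ F) (T : F →ₗ[ℂ] F) : ↥S →ₗ[ℂ] ↥S :=
  have := FiniteDimensional.complete ℂ ↥S
  S.orthogonalProjectionOnto.toLinearMap ∘ₗ T ∘ₗ S.subtype

end

/-! The relations `W ∘ P j = P' j ∘ W` and `W ∘ J = J'` turn each Kraus operator `P' j ∘ J'` of
`Λ'_A` into `W ∘ (P j ∘ J)`, so `Λ'_A = Φ ∘ Λ_A` for `Φ(σ) = W σ W*`. As `W* W = 1`, every output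
of `Λ'_A` has the form `W σ W*`: the projection `1 - W W*` annihilates it and `W* (·) W` recovers
`σ`, whence `ι ∘ Λ'_A = Λ_A`. Both maps are channels: `Φ` has the single Kraus operator `W`, and
`ι` is the compression by `W*` plus the replacement channel `τ ↦ tr τ • σ₀` precomposed with the
compression by the projection `1 - W W*`. -/

open LinearMap InnerProductSpace

@[simp] theorem sandwich_apply {E F : Type*} [NormedAddCommGroup E] [InnerProductSpace ℂ E]
    [NormedAddCommGroup F] [InnerProductSpace ℂ F] (U : E →ₗ[ℂ] F) (V : F →ₗ[ℂ] E)
    (σ : E →ₗ[ℂ] E) : sandwich U V σ = U ∘ₗ σ ∘ₗ V :=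
  rfl

section Kraus

variable {E F G : Type*} [NormedAddCommGroup E] [InnerProductSpace ℂ E] [FiniteDimensional ℂ E]
  [NormedAddCommGroup F] [InnerProductSpace ℂ F] [FiniteDimensional ℂ F]
  [NormedAddCommGroup G] [InnerProductSpace ℂ G] [FiniteDimensional ℂ G]

theorem IsPosOp.isPositive {T : E →ₗ[ℂ] E} (hT : IsPosOp T) : T.IsPositive :=
  (isPositive_iff T).mpr ⟨(isSymmetric_iff_isSelfAdjoint T).mpr hT.1, hT.2⟩

theorem isCPMap_of_kraus {ι : Type*} [Fintype ι] {Λ : (E →ₗ[ℂ] E) →ₗ[ℂ] (F →ₗ[ℂ] F)}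
    (V : ι → E →ₗ[ℂ] F) (h : ∀ ρ, Λ ρ = ∑ i, V i ∘ₗ ρ ∘ₗ adjoint (V i)) : IsCPMap Λ :=
  ⟨Fintype.card ι, V ∘ (Fintype.equivFin ι).symm,
    fun ρ => (h ρ).trans ((Fintype.equivFin ι).symm.sum_comp _).symm⟩

theorem IsCPMap.add {Λ₁ Λ₂ : (E →ₗ[ℂ] E) →ₗ[ℂ] (F →ₗ[ℂ] F)} (h₁ : IsCPMap Λ₁)
    (h₂ : IsCPMap Λ₂) : IsCPMap (Λ₁ + Λ₂) := by
  obtain ⟨n₁, V₁, hV₁⟩ := h₁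
  obtain ⟨n₂, V₂, hV₂⟩ := h₂
  exact isCPMap_of_kraus (Sum.elim V₁ V₂) fun ρ => by
    simp [Fintype.sum_sum_type, hV₁, hV₂]

theorem IsCPMap.comp {Γ : (F →ₗ[ℂ] F) →ₗ[ℂ] (G →ₗ[ℂ] G)} {Λ : (E →ₗ[ℂ] E) →ₗ[ℂ] (F →ₗ[ℂ] F)}
    (hΓ : IsCPMap Γ) (hΛ : IsCPMap Λ) : IsCPMap (Γ ∘ₗ Λ) := by
  obtain ⟨m, U, hU⟩ := hΓ
  obtain ⟨n, V, hV⟩ := hΛ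
  refine isCPMap_of_kraus (fun p : Fin m × Fin n => U p.1 ∘ₗ V p.2) fun ρ => ?_
  ext x
  simp [hU, hV, Fintype.sum_prod_type, adjoint_comp, map_sum]

theorem isCPMap_sandwich_adjoint (V : E →ₗ[ℂ] F) : IsCPMap (sandwich V (adjoint V)) :=
  isCPMap_of_kraus (fun _ : Unit => V) fun ρ => by simp

theorem rankOne_comp_comp_adjoint_rankOne (x : F) (y : E) (T : E →ₗ[ℂ] E) :
    (rankOne ℂ x y : E →ₗ[ℂ] F) ∘ₗ T ∘ₗ adjoint (rankOne ℂ x y : E →ₗ[ℂ] F) =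
      inner ℂ y (T y) • (rankOne ℂ x x : F →ₗ[ℂ] F) := by
  rw [ContinuousLinearMap.adjoint_toLinearMap, adjoint_rankOne]
  ext z
  simp [smul_smul, mul_comm]

theorem isCPMap_smulRight_trace {σ : F →ₗ[ℂ] F} (hσ : IsPosOp σ) :
    IsCPMap ((trace ℂ E).smulRight σ) := by
  obtain ⟨m, u, hu⟩ :=
    ContinuousLinearMap.isPositive_iff_eq_sum_rankOne.mp
      ((isPositive_toContinuousLinearMap_iff σ).mpr hσ.isPositive)
  have hσ_eq : σ = ∑ i, ((rankOne ℂ (u i) (u i) : F →L[ℂ] F) : F →ₗ[ℂ] F) := by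
    simpa using congrArg ContinuousLinearMap.toLinearMap hu
  let e := stdOrthonormalBasis ℂ E
  refine isCPMap_of_kraus (fun p : Fin m × _ => (rankOne ℂ (u p.1) (e p.2) : E →ₗ[ℂ] F))
    fun ρ => ?_
  simp only [rankOne_comp_comp_adjoint_rankOne, Fintype.sum_prod_type, ← Finset.sum_smul,
    ← trace_eq_sum_inner, smulRight_apply, hσ_eq, Finset.smul_sum]

end Kraus

section Dilation

variable {M M' : Type*} [NormedAddCommGroup M] [InnerProductSpace ℂ M] [FiniteDimensional ℂ M]
  [NormedAddCommGroup M'] [InnerProductSpace ℂ M'] [FiniteDimensional ℂ M']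

theorem IsIsometryOp.adjoint_apply_apply {W : M →ₗ[ℂ] M'} (hW : IsIsometryOp W) (x : M) :
    adjoint W (W x) = x :=
  LinearMap.congr_fun hW x

theorem IsIsometryOp.isChannel_sandwich {W : M →ₗ[ℂ] M'} (hW : IsIsometryOp W) :
    IsChannel (sandwich W (adjoint W)) := by
  refine ⟨isCPMap_sandwich_adjoint W, fun σ => ?_⟩
  rw [sandwich_apply, trace_comp_comm', comp_assoc, hW]
  rfl

/-- The channel `ι` of the paper: it undoes `σ ↦ W σ W*` and sends the weight outside the range
of `W` to the state `σ₀`. -/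
noncomputable def isometryRetraction (W : M →ₗ[ℂ] M') (σ₀ : M →ₗ[ℂ] M) :
    (M' →ₗ[ℂ] M') →ₗ[ℂ] (M →ₗ[ℂ] M) :=
  sandwich (adjoint W) W + ((trace ℂ M').comp (mulLeft ℂ (1 - W ∘ₗ adjoint W))).smulRight σ₀

theorem isometryRetraction_apply (W : M →ₗ[ℂ] M') (σ₀ : M →ₗ[ℂ] M) (σ : M' →ₗ[ℂ] M') :
    isometryRetraction W σ₀ σ =
      adjoint W ∘ₗ σ ∘ₗ W + trace ℂ M' ((1 - W ∘ₗ adjoint W) ∘ₗ σ) • σ₀ :=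
  rfl

theorem isometryRetraction_conj {W : M →ₗ[ℂ] M'} (hW : IsIsometryOp W) (σ₀ σ : M →ₗ[ℂ] M) :
    isometryRetraction W σ₀ (W ∘ₗ σ ∘ₗ adjoint W) = σ := by
  have hQσ : (1 - W ∘ₗ adjoint W) ∘ₗ W ∘ₗ σ ∘ₗ adjoint W = 0 := by
    ext x
    simp [hW.adjoint_apply_apply]
  rw [isometryRetraction_apply, hQσ, map_zero, zero_smul, add_zero]
  ext x
  simp [hW.adjoint_apply_apply]

theorem IsIsometryOp.isCPMap_isometryRetraction {W : M →ₗ[ℂ] M'} (hW : IsIsometryOp W)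
    {σ₀ : M →ₗ[ℂ] M} (hσ₀ : IsPosOp σ₀) : IsCPMap (isometryRetraction W σ₀) := by
  set Q : M' →ₗ[ℂ] M' := 1 - W ∘ₗ adjoint W
  have hQ_adj : adjoint Q = Q := by simp [Q, adjoint_comp]
  have hQ_idem : Q ∘ₗ Q = Q := by
    ext x
    simp [Q, hW.adjoint_apply_apply]
  have hdecomp : isometryRetraction W σ₀ = sandwich (adjoint W) (adjoint (adjoint W)) +
      (trace ℂ M').smulRight σ₀ ∘ₗ sandwich Q (adjoint Q) := by
    ext1 σ
    rw [LinearMap.add_apply, comp_apply, smulRight_apply, sandwich_apply, sandwich_apply, hQ_adj,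
      trace_comp_comm', comp_assoc, hQ_idem, ← trace_comp_comm', adjoint_adjoint]
    rfl
  rw [hdecomp]
  exact (isCPMap_sandwich_adjoint _).add ((isCPMap_smulRight_trace hσ₀).comp
    (isCPMap_sandwich_adjoint Q))

theorem IsIsometryOp.isChannel_isometryRetraction {W : M →ₗ[ℂ] M'} (hW : IsIsometryOp W)
    {σ₀ : M →ₗ[ℂ] M} (hσ₀ : IsPosOp σ₀) (hσ₀_tr : trace ℂ M σ₀ = 1) :
    IsChannel (isometryRetraction W σ₀) := by
  refine ⟨hW.isCPMap_isometryRetraction hσ₀, fun σ => ?_⟩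
  rw [isometryRetraction_apply, map_add, map_smul, hσ₀_tr, smul_eq_mul, mul_one, sub_comp,
    map_sub, trace_comp_comm', comp_assoc, trace_comp_comm' (W ∘ₗ adjoint W) σ,
    add_sub_cancel]
  rfl

end Dilation

theorem leastDisturbing_comp_of_intertwines {H M M' : Type*}
    [NormedAddCommGroup H] [InnerProductSpace ℂ H] [FiniteDimensional ℂ H]
    [NormedAddCommGroup M] [InnerProductSpace ℂ M] [FiniteDimensional ℂ M]
    [NormedAddCommGroup M'] [InnerProductSpace ℂ M'] [FiniteDimensional ℂ M']
    {Ω : Type*} [Fintype Ω] {P : Ω → M →ₗ[ℂ] M} {P' : Ω → M' →ₗ[ℂ] M'} {W : M →ₗ[ℂ] M'}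
    (hP : ∀ j, adjoint (P j) = P j) (hP' : ∀ j, adjoint (P' j) = P' j)
    (hWP : ∀ j, W ∘ₗ P j = P' j ∘ₗ W) (J : H →ₗ[ℂ] M) (ρ : H →ₗ[ℂ] H) :
    leastDisturbing P' (W ∘ₗ J) ρ = W ∘ₗ leastDisturbing P J ρ ∘ₗ adjoint W := by
  have hPW : ∀ j, P j ∘ₗ adjoint W = adjoint W ∘ₗ P' j := fun j => by
    simpa only [adjoint_comp, hP, hP'] using congrArg adjoint (hWP j)
  ext x
  simp only [leastDisturbing, LinearMap.sum_apply, sandwich_apply, comp_apply, map_sum,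
    adjoint_comp]
  refine Finset.sum_congr rfl fun j _ => ?_
  rw [← comp_apply W (P j), hWP, ← comp_apply (P j), hPW]
  rfl

theorem stmt_15_general {H M M' : Type*}
    [NormedAddCommGroup H] [InnerProductSpace ℂ H] [FiniteDimensional ℂ H]
    [NormedAddCommGroup M] [InnerProductSpace ℂ M] [FiniteDimensional ℂ M]
    [NormedAddCommGroup M'] [InnerProductSpace ℂ M'] [FiniteDimensional ℂ M']
    {Ω : Type*} [Fintype Ω]
    (A : Ω → H →ₗ[ℂ] H)
    (P : Ω → M →ₗ[ℂ] M) (J : H →ₗ[ℂ] M) (hdil : IsMinimalNaimark A P J)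
    (P' : Ω → M' →ₗ[ℂ] M') (J' : H →ₗ[ℂ] M') (hdil' : IsNaimark A P' J')
    (W : M →ₗ[ℂ] M') (hW : IsIsometryOp W)
    (hWP : ∀ j, W ∘ₗ P j = P' j ∘ₗ W) (hWJ : W ∘ₗ J = J')
    (σ₀ : M →ₗ[ℂ] M) (hσ₀pos : IsPosOp σ₀) (hσ₀tr : LinearMap.trace ℂ M σ₀ = 1) :
    (∀ ρ, leastDisturbing P' J' ρ = W ∘ₗ leastDisturbing P J ρ ∘ₗ LinearMap.adjoint W) ∧
    (∀ ρ, leastDisturbing P J ρ =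
      LinearMap.adjoint W ∘ₗ leastDisturbing P' J' ρ ∘ₗ W +
      (LinearMap.trace ℂ M'
        (((1 : M' →ₗ[ℂ] M') - W ∘ₗ LinearMap.adjoint W) ∘ₗ leastDisturbing P' J' ρ)) • σ₀) ∧
    ChanEquiv (leastDisturbing P' J') (leastDisturbing P J) := by
  obtain ⟨⟨⟨hP, -⟩, -⟩, -⟩ := hdil
  obtain ⟨⟨hP', -⟩, -⟩ := hdil'
  subst hWJ
  have hΦ : ∀ ρ, leastDisturbing P' (W ∘ₗ J) ρ = W ∘ₗ leastDisturbing P J ρ ∘ₗ adjoint W :=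
    leastDisturbing_comp_of_intertwines (fun j => (hP j).1) (fun j => (hP' j).1) hWP J
  have hι : ∀ ρ, leastDisturbing P J ρ =
      isometryRetraction W σ₀ (leastDisturbing P' (W ∘ₗ J) ρ) := fun ρ => by
    rw [hΦ, isometryRetraction_conj hW]
  exact ⟨hΦ, hι, ⟨sandwich W (adjoint W), hW.isChannel_sandwich, LinearMap.ext hΦ⟩,
    ⟨isometryRetraction W σ₀, hW.isChannel_isometryRetraction hσ₀pos hσ₀tr, LinearMap.ext hι⟩⟩

/-- Least disturbing channels built from different Naimark dilations of the
same observable are post-processing equivalent, via the explicit channels `Φ` and `ι`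
built from the intertwining isometry `W`. -/
theorem stmt_15 {H M M' : Type*}
    [NormedAddCommGroup H] [InnerProductSpace ℂ H] [FiniteDimensional ℂ H]
    [NormedAddCommGroup M] [InnerProductSpace ℂ M] [FiniteDimensional ℂ M]
    [NormedAddCommGroup M'] [InnerProductSpace ℂ M'] [FiniteDimensional ℂ M']
    {Ω : Type*} [Fintype Ω]
    (A : Ω → H →ₗ[ℂ] H) (hA : IsPOVM A)
    (P : Ω → M →ₗ[ℂ] M) (J : H →ₗ[ℂ] M) (hdil : IsMinimalNaimark A P J)
    (P' : Ω → M' →ₗ[ℂ] M') (J' : H →ₗ[ℂ] M') (hdil' : IsNaimark A P' J')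
    (W : M →ₗ[ℂ] M') (hW : IsIsometryOp W)
    (hWP : ∀ j, W ∘ₗ P j = P' j ∘ₗ W) (hWJ : W ∘ₗ J = J')
    (σ₀ : M →ₗ[ℂ] M) (hσ₀pos : IsPosOp σ₀) (hσ₀tr : LinearMap.trace ℂ M σ₀ = 1) :
    (∀ ρ, leastDisturbing P' J' ρ = W ∘ₗ leastDisturbing P J ρ ∘ₗ LinearMap.adjoint W) ∧
    (∀ ρ, leastDisturbing P J ρ =
      LinearMap.adjoint W ∘ₗ leastDisturbing P' J' ρ ∘ₗ W +
      (LinearMap.trace ℂ M'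
        (((1 : M' →ₗ[ℂ] M') - W ∘ₗ LinearMap.adjoint W) ∘ₗ leastDisturbing P' J' ρ)) • σ₀) ∧
    ChanEquiv (leastDisturbing P' J') (leastDisturbing P J) :=
  stmt_15_general A P J hdil P' J' hdil' W hW hWP hWJ σ₀ hσ₀pos hσ₀tr
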